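/- Suppose n = Mk for a positive integer M, and let I_r = {1, M+1, 2M+1, ..., (k−1)M+1} select every M-th row of the generator matrix G of an (n,k) BCH-DFT code, yielding square submatrix G_k. Then det(G_k G_k^H) = (2^{k(k−1)}/k^k) · ∏_{r=1}^{k−1} (sin²(πr/k))^{k−r} = 1, and consequently all eigenvalues of G_k G_k^H equal 1. -/

import Mathlib

open Matrix Finset Complex Real

/-- The unitary `l × l` DFT matrix, with entries `(1/√l)·exp(-2πi·r·s/l)`. -/
noncomputable def dftMatrix (l : ℕ) : Matrix (Fin l) (Fin l) ℂ :=
  fun r s => (1 / Real.sqrt l : ℝ) * Complex.exp (-(2 * Real.pi * Complex.I * r.val * s.val) / l)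

/-- The `n × k` selection matrix with an `α × α` identity block at the top-left and a
`β × β` identity block at the bottom-right (`α + β = k`), zeros elsewhere. -/
def sigmaMat (n k α : ℕ) : Matrix (Fin n) (Fin k) ℂ :=
  fun r s => if (s.val < α ∧ r.val = s.val) ∨ (α ≤ s.val ∧ r.val = s.val + (n - k)) then 1 else 0

/-- The generator matrix `G = √(n/k) · Wₙᴴ Σ W_k` of an `(n,k)` BCH-DFT code. -/
noncomputable def genMatrix (n k α : ℕ) : Matrix (Fin n) (Fin k) ℂ :=
  (Real.sqrt ((n : ℝ) / k) : ℂ) • ((dftMatrix n)ᴴ * sigmaMat n k α * dftMatrix k)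

/-!
The selected rows of `G` are the rows of the identity. With `ω_l = exp (2πi/l)`, entry `(iM, b)`
of `Wₙᴴ Σ` is `ωₙ^(s·iM)/√n = ω_k^(s·i)/√n`, where `s` is the row of the `1` in column `b` of `Σ`,
and `s ≡ b (mod k)` because the second block is shifted by `n - k = (M - 1)k`. So row `iM` of `G`
is row `i` of `√(n/k) · √(k/n) · W_kᴴ W_k = I`.

The trigonometric expression equals `1`: pairing `r` with `k - r` turns
`∏ (sin² (πr/k))^(k-r)` into `(∏ sin (πr/k))^k`, and `∏_{0<r<k} 2 sin (πr/k) = k` is the norm of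
`∏ (1 - ζ^r) = k` for a primitive `k`-th root of unity `ζ`.
-/

noncomputable def dftRoot (l : ℕ) : ℂ := exp (2 * π * I / l)

theorem dftRoot_isPrimitiveRoot {l : ℕ} (hl : l ≠ 0) : IsPrimitiveRoot (dftRoot l) l :=
  Complex.isPrimitiveRoot_exp l hl

theorem dftRoot_pow (l r : ℕ) : dftRoot l ^ r = exp (I * (2 * π * r / l : ℝ)) := by
  rw [dftRoot, ← Complex.exp_nat_mul]
  push_cast
  ring_nf

theorem norm_dftRoot (l : ℕ) : ‖dftRoot l‖ = 1 := by
  rw [← pow_one (dftRoot l), dftRoot_pow, mul_comm, Complex.norm_exp_ofReal_mul_I]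

theorem dftRoot_mul_pow {M : ℕ} (hM : M ≠ 0) (k : ℕ) : dftRoot (M * k) ^ M = dftRoot k := by
  rw [dftRoot, dftRoot, ← Complex.exp_nat_mul, Nat.cast_mul, mul_div_assoc',
    mul_div_mul_left _ _ (Nat.cast_ne_zero.2 hM)]

theorem IsPrimitiveRoot.sum_pow_mul_div_pow_mul {K : Type*} [Field K] {ζ : K} {k : ℕ}
    (hζ : IsPrimitiveRoot ζ k) (i j : Fin k) :
    ∑ b : Fin k, ζ ^ (b.val * i.val) / ζ ^ (b.val * j.val) = if i = j then (k : K) else 0 := by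
  have hζ0 : ζ ≠ 0 := hζ.ne_zero (Fin.pos i).ne'
  have hterm : ∀ b : Fin k,
      ζ ^ (b.val * i.val) / ζ ^ (b.val * j.val) = (ζ ^ i.val / ζ ^ j.val) ^ b.val :=
    fun b => by rw [div_pow, ← pow_mul, ← pow_mul, mul_comm i.val, mul_comm j.val]
  simp only [hterm]
  rw [Fin.sum_univ_eq_sum_range (fun b => (ζ ^ i.val / ζ ^ j.val) ^ b)]
  split_ifs with hij
  · simp [hij, hζ0]
  · have hne : ζ ^ i.val / ζ ^ j.val ≠ 1 := by
      rw [Ne, div_eq_one_iff_eq (pow_ne_zero _ hζ0)]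
      exact fun h => hij (Fin.ext (hζ.pow_inj i.isLt j.isLt h))
    rw [geom_sum_eq hne, div_pow, ← pow_mul, ← pow_mul, mul_comm i.val, mul_comm j.val, pow_mul,
      pow_mul, hζ.pow_eq_one, one_pow, one_pow, div_one, sub_self, zero_div]

theorem norm_one_sub_dftRoot_pow {l r : ℕ} (hrl : r ≤ l) :
    ‖1 - dftRoot l ^ r‖ = 2 * Real.sin (π * r / l) := by
  have hθ : 2 * π * r / l / 2 = π * r / l := by ring
  rw [norm_sub_rev, dftRoot_pow, Complex.norm_exp_I_mul_ofReal_sub_one, hθ, Real.norm_eq_abs,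
    abs_of_nonneg]
  refine mul_nonneg zero_le_two (Real.sin_nonneg_of_nonneg_of_le_pi (by positivity) ?_)
  rw [mul_div_assoc]
  exact mul_le_of_le_one_right pi_pos.le (div_le_one_of_le₀ (by exact_mod_cast hrl) (by positivity))

theorem prod_two_mul_sin_pi_mul_div {k : ℕ} (hk : k ≠ 0) :
    ∏ r ∈ Ico 1 k, 2 * Real.sin (π * r / k) = k := by
  obtain ⟨m, rfl⟩ := Nat.exists_eq_succ_of_ne_zero hk
  have h := congr_arg norm (dftRoot_isPrimitiveRoot hk).prod_one_sub_pow_eq_order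
  rw [norm_prod, ← Nat.cast_succ, Complex.norm_natCast] at h
  rw [prod_Ico_eq_prod_range, Nat.succ_sub_one]
  refine (prod_congr rfl fun r hr => ?_).trans h
  have hrm : r + 1 ≤ m.succ := Nat.succ_le_succ (mem_range.1 hr).le
  rw [norm_one_sub_dftRoot_pow hrm, add_comm]

theorem prod_Ico_sq_pow_sub_of_symm {M : Type*} [CommMonoid M] {f : ℕ → M} {k : ℕ}
    (hf : ∀ r ∈ Ico 1 k, f (k - r) = f r) :
    ∏ r ∈ Ico 1 k, (f r ^ 2) ^ (k - r) = (∏ r ∈ Ico 1 k, f r) ^ k := by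
  have hreflect : ∏ r ∈ Ico 1 k, f r ^ (k - r) = ∏ r ∈ Ico 1 k, f r ^ r := by
    calc ∏ r ∈ Ico 1 k, f r ^ (k - r) = ∏ r ∈ Ico 1 k, f (k - r) ^ (k - r) :=
          prod_congr rfl fun r hr => by rw [hf r hr]
      _ = ∏ r ∈ Ico 1 k, f r ^ r := by
          rw [prod_Ico_reflect (fun r => f r ^ r) 1 (Nat.le_succ k)]
          simp
  calc ∏ r ∈ Ico 1 k, (f r ^ 2) ^ (k - r)
      = (∏ r ∈ Ico 1 k, f r ^ (k - r)) * ∏ r ∈ Ico 1 k, f r ^ r := by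
        rw [← hreflect, ← prod_mul_distrib]
        exact prod_congr rfl fun r _ => by rw [← pow_mul, mul_comm, pow_mul, sq]
    _ = ∏ r ∈ Ico 1 k, f r ^ k := by
        rw [← prod_mul_distrib]
        exact prod_congr rfl fun r hr => by rw [← pow_add, Nat.sub_add_cancel (mem_Ico.1 hr).2.le]
    _ = (∏ r ∈ Ico 1 k, f r) ^ k := prod_pow _ _ _

theorem two_pow_div_mul_prod_sin_sq_pow_eq_one (k : ℕ) :
    (2 : ℝ) ^ (k * (k - 1)) / (k : ℝ) ^ k *
      ∏ r ∈ Ico 1 k, (Real.sin (π * r / k) ^ 2) ^ (k - r) = 1 := by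
  rcases eq_or_ne k 0 with rfl | hk
  · simp
  have hsymm : ∀ r ∈ Ico 1 k, Real.sin (π * ↑(k - r) / k) = Real.sin (π * r / k) := fun r hr => by
    rw [Nat.cast_sub (mem_Ico.1 hr).2.le, ← Real.sin_pi_sub]
    congr 1
    field_simp
    ring
  have hprod : (2 : ℝ) ^ (k - 1) * ∏ r ∈ Ico 1 k, Real.sin (π * r / k) = k := by
    simpa only [prod_mul_distrib, prod_const, Nat.card_Ico] using prod_two_mul_sin_pi_mul_div hk
  rw [prod_Ico_sq_pow_sub_of_symm (f := fun r => Real.sin (π * r / k)) hsymm,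
    Nat.mul_comm k (k - 1), pow_mul, div_mul_eq_mul_div, ← mul_pow, hprod, div_self (by positivity)]

theorem dftMatrix_apply_eq (l : ℕ) (r s : Fin l) :
    dftMatrix l r s = (√l : ℂ)⁻¹ * (dftRoot l ^ (r.val * s.val))⁻¹ := by
  rw [dftMatrix, dftRoot, ← Complex.exp_nat_mul, ← Complex.exp_neg]
  push_cast
  ring_nf

theorem star_dftMatrix_apply (l : ℕ) (r s : Fin l) :
    star (dftMatrix l r s) = (√l : ℂ)⁻¹ * dftRoot l ^ (r.val * s.val) := by
  rw [dftMatrix_apply_eq, star_mul', star_inv₀, star_inv₀, Complex.star_def, Complex.conj_ofReal,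
    map_pow, ← Complex.inv_eq_conj (norm_dftRoot l), inv_pow, inv_inv]

def sigmaRow (n k α : ℕ) (b : Fin k) : ℕ := if b.val < α then b.val else b.val + (n - k)

theorem sigmaMat_apply (n k α : ℕ) (s : Fin n) (b : Fin k) :
    sigmaMat n k α s b = if s.val = sigmaRow n k α b then 1 else 0 := by
  refine if_congr ?_ rfl rfl
  unfold sigmaRow
  split_ifs <;> omega

theorem sigmaRow_lt {n k : ℕ} (α : ℕ) (hkn : k ≤ n) (b : Fin k) : sigmaRow n k α b < n := by
  unfold sigmaRow
  split_ifs <;> omega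

theorem sigmaRow_modEq {n k : ℕ} (α : ℕ) (hdvd : k ∣ n) (b : Fin k) :
    sigmaRow n k α b ≡ b [MOD k] := by
  unfold sigmaRow
  split_ifs
  · rfl
  · exact (Nat.modEq_zero_iff_dvd.2 (Nat.dvd_sub hdvd dvd_rfl)).add_left b

theorem conjTranspose_dftMatrix_mul_sigmaMat_apply {n k : ℕ} (α : ℕ) (hkn : k ≤ n) (r : Fin n)
    (b : Fin k) : ((dftMatrix n)ᴴ * sigmaMat n k α) r b
      = (√n : ℂ)⁻¹ * dftRoot n ^ (sigmaRow n k α b * r.val) := by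
  rw [mul_apply, Fintype.sum_eq_single ⟨sigmaRow n k α b, sigmaRow_lt α hkn b⟩]
  · simp [sigmaMat_apply, star_dftMatrix_apply]
  · intro s hs
    rw [sigmaMat_apply, if_neg (fun h => hs (Fin.ext h)), mul_zero]

theorem genMatrix_apply_of_val_eq_mul {n k M : ℕ} (α : ℕ) (hM : M ≠ 0) (hn : n = M * k)
    (r : Fin n) (i j : Fin k) (hr : r.val = i.val * M) :
    genMatrix n k α r j = if i = j then 1 else 0 := by
  have hk : k ≠ 0 := (Fin.pos i).ne'
  have hζ := dftRoot_isPrimitiveRoot hk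
  have hrow : ∀ b : Fin k, dftRoot n ^ (sigmaRow n k α b * r.val) = dftRoot k ^ (b.val * i.val) :=
    fun b => by
      rw [hr, hn, ← mul_assoc, mul_comm _ M, pow_mul, dftRoot_mul_pow hM]
      exact pow_eq_pow_of_modEq ((sigmaRow_modEq α (hn ▸ dvd_mul_left k M) b).mul_right _)
        hζ.pow_eq_one
  have hkn : k ≤ n := hn ▸ Nat.le_mul_of_pos_left k (Nat.pos_of_ne_zero hM)
  have hscale : (√(n / k : ℝ) : ℂ) * ((√n : ℂ)⁻¹ * (√k : ℂ)⁻¹) * k = 1 := by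
    have hn0 : 0 < (n : ℝ) := by rw [hn]; positivity
    have hk0 : 0 < (k : ℝ) := by positivity
    have : √(n / k : ℝ) * ((√n)⁻¹ * (√k)⁻¹) * k = 1 := by
      rw [Real.sqrt_div' _ hk0.le]
      field_simp
      exact (Real.sq_sqrt hk0.le).symm
    exact_mod_cast this
  calc genMatrix n k α r j
      = (√(n / k : ℝ) : ℂ) * ((√n : ℂ)⁻¹ * (√k : ℂ)⁻¹) *
          ∑ b : Fin k, dftRoot k ^ (b.val * i.val) / dftRoot k ^ (b.val * j.val) := by
        rw [genMatrix, Matrix.smul_apply, smul_eq_mul, mul_apply, mul_sum, mul_sum]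
        refine sum_congr rfl fun b _ => ?_
        rw [conjTranspose_dftMatrix_mul_sigmaMat_apply α hkn, dftMatrix_apply_eq, hrow]
        ring
    _ = if i = j then 1 else 0 := by
        rw [hζ.sum_pow_mul_div_pow_mul]
        split_ifs
        · exact hscale
        · exact mul_zero _

theorem genMatrix_submatrix_eq_one {n k M : ℕ} (α : ℕ) (hM : M ≠ 0) (hn : n = M * k)
    (f : Fin k → Fin n) (hf : ∀ i, (f i).val = i.val * M) :
    (genMatrix n k α).submatrix f id = 1 := by
  ext i j
  rw [submatrix_apply, id, genMatrix_apply_of_val_eq_mul α hM hn (f i) i j (hf i), one_apply]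

theorem Matrix.IsHermitian.eigenvalues_eq_one_of_eq_one {𝕜 ι : Type*} [RCLike 𝕜] [Fintype ι]
    [DecidableEq ι] {A : Matrix ι ι 𝕜} (hA : A.IsHermitian) (h : A = 1) (i : ι) :
    hA.eigenvalues i = 1 := by
  subst h
  have : Nonempty ι := ⟨i⟩
  simpa [spectrum.one_eq] using hA.eigenvalues_mem_spectrum_real i

theorem every_Mth_row_tight_general {n k M α : ℕ} (hM : 0 < M) (hn : n = M * k)
    (f : Fin k → Fin n) (hfdef : ∀ i, (f i).val = i.val * M) :
    ((genMatrix n k α).submatrix f id * ((genMatrix n k α).submatrix f id)ᴴ).det =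
        ((((2 : ℝ) ^ (k * (k - 1)) / (k : ℝ) ^ k) *
          ∏ r ∈ Finset.Ico 1 k, (Real.sin (π * r / k) ^ 2) ^ (k - r) : ℝ) : ℂ) ∧
    ((genMatrix n k α).submatrix f id * ((genMatrix n k α).submatrix f id)ᴴ).det = 1 ∧
    ∀ i, (Matrix.isHermitian_mul_conjTranspose_self
        ((genMatrix n k α).submatrix f id)).eigenvalues i = 1 := by
  have hGG : (genMatrix n k α).submatrix f id * ((genMatrix n k α).submatrix f id)ᴴ = 1 := by
    rw [genMatrix_submatrix_eq_one α hM.ne' hn f hfdef, conjTranspose_one, mul_one]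
  have hdet : ((genMatrix n k α).submatrix f id * ((genMatrix n k α).submatrix f id)ᴴ).det = 1 := by
    rw [hGG, det_one]
  refine ⟨?_, hdet, fun i => IsHermitian.eigenvalues_eq_one_of_eq_one _ hGG i⟩
  rw [hdet, two_pow_div_mul_prod_sin_sq_pow_eq_one, Complex.ofReal_one]

/-- When `n = Mk` and `G_k` selects every `M`-th row of `G` (rows `1, M+1, …, (k−1)M+1`,
i.e. 0-based indices `i·M`), one gets
`det(G_k G_kᴴ) = (2^{k(k−1)}/k^k) · ∏_{r=1}^{k−1} (sin²(πr/k))^{k−r} = 1`,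
and consequently every eigenvalue of `G_k G_kᴴ` equals `1`. -/
theorem every_Mth_row_tight {n k M α β : ℕ} (hk : 0 < k) (hM : 0 < M) (hn : n = M * k)
    (hkn : k < n) (hab : α + β = k)
    (f : Fin k → Fin n) (hfdef : ∀ i, (f i).val = i.val * M) :
    ((genMatrix n k α).submatrix f id * ((genMatrix n k α).submatrix f id)ᴴ).det =
        ((((2 : ℝ) ^ (k * (k - 1)) / (k : ℝ) ^ k) *
          ∏ r ∈ Finset.Ico 1 k, (Real.sin (π * r / k) ^ 2) ^ (k - r) : ℝ) : ℂ) ∧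
    ((genMatrix n k α).submatrix f id * ((genMatrix n k α).submatrix f id)ᴴ).det = 1 ∧
    ∀ i, (Matrix.isHermitian_mul_conjTranspose_self
        ((genMatrix n k α).submatrix f id)).eigenvalues i = 1 :=
  every_Mth_row_tight_general hM hn f hfdef
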